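/- arXiv:1104.2530 — 2 statements merged into one kernel-verified Lean document; each statement's English description precedes it below -/
import Mathlib

section
/- Let n, m be positive integers. Let W := { (R^T L_m^{(1)} + L_n^{(1)} S, R^T L_m^{(2)} + L_n^{(2)} S) : S ∈ ℂ^{(2n+1)×(2m+1)}, R ∈ ℂ^{(2m+1)×(2n+1)} } ⊆ ℂ^{(2n+1)×(2m+1)} × ℂ^{(2n+1)×(2m+1)}, and let P be the subspace of pairs (X, Y) of (2n+1)×(2m+1) complex matrices such that X_{ij} = 0 unless (i,j) = (n+1, m+1), and Y_{ij} = 0 unless (i,j) lies in {(1,q) : 1 ≤ q ≤ m+1} ∪ {(p, m+1) : 1 ≤ p ≤ n+1} ∪ {(n+1, m+1+q) : n+1 ≤ q ≤ m−1} ∪ {(n+1+p, m+1) : m+1 ≤ p ≤ n−1} (the third set being empty unless n+1 < m and the fourth empty unless m+1 < n). Then ℂ^{(2n+1)×(2m+1)} × ℂ^{(2n+1)×(2m+1)} = W ⊕ P. -/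
open Matrix

noncomputable section

/-- `Λ_n(λ)`: the `n × n` matrix with `(i,j)` entry `λ` if `i + j = n + 1`, `1` if
`i + j = n + 2`, and `0` otherwise (1-based indices). -/
def lamM (n : ℕ) (lam : ℂ) : Matrix (Fin n) (Fin n) ℂ :=
  Matrix.of fun i j =>
    if (i : ℕ) + 1 + ((j : ℕ) + 1) = n + 1 then lam
    else if (i : ℕ) + 1 + ((j : ℕ) + 1) = n + 2 then 1 else 0

/-- `Δ_n`: the `n × n` matrix with `(i,j)` entry `1` if `i + j = n + 1` and `0`
otherwise (1-based indices). -/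
def delM (n : ℕ) : Matrix (Fin n) (Fin n) ℂ :=
  Matrix.of fun i j => if (i : ℕ) + 1 + ((j : ℕ) + 1) = n + 1 then 1 else 0

/-- `F_n`: the `n × (n+1)` matrix with `F_n(i,j) = 1` exactly when `j = i`. -/
def FM (n : ℕ) : Matrix (Fin n) (Fin (n + 1)) ℂ :=
  Matrix.of fun i j => if (j : ℕ) = (i : ℕ) then 1 else 0

/-- `G_n`: the `n × (n+1)` matrix with `G_n(i,j) = 1` exactly when `j = i + 1`. -/
def GM (n : ℕ) : Matrix (Fin n) (Fin (n + 1)) ℂ :=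
  Matrix.of fun i j => if (j : ℕ) = (i : ℕ) + 1 then 1 else 0

/-- `L_n^{(1)} = [[0, F_nᵀ], [F_n, 0]]`, a symmetric `(2n+1) × (2n+1)` matrix. -/
def L1M (n : ℕ) : Matrix (Fin (2 * n + 1)) (Fin (2 * n + 1)) ℂ :=
  Matrix.reindex (finSumFinEquiv.trans (finCongr (by omega)))
    (finSumFinEquiv.trans (finCongr (by omega)))
    (Matrix.fromBlocks 0 (FM n)ᵀ (FM n) 0)

/-- `L_n^{(2)} = [[0, G_nᵀ], [G_n, 0]]`, a symmetric `(2n+1) × (2n+1)` matrix. -/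
def L2M (n : ℕ) : Matrix (Fin (2 * n + 1)) (Fin (2 * n + 1)) ℂ :=
  Matrix.reindex (finSumFinEquiv.trans (finCongr (by omega)))
    (finSumFinEquiv.trans (finCongr (by omega)))
    (Matrix.fromBlocks 0 (GM n)ᵀ (GM n) 0)

theorem lamM_isSymm (n : ℕ) (lam : ℂ) : (lamM n lam).IsSymm := by
  unfold Matrix.IsSymm lamM
  ext i j
  simp only [Matrix.transpose_apply, Matrix.of_apply]
  split_ifs <;> first | rfl | omega

theorem delM_isSymm (n : ℕ) : (delM n).IsSymm := by
  unfold Matrix.IsSymm delM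
  ext i j
  simp only [Matrix.transpose_apply, Matrix.of_apply]
  split_ifs <;> first | rfl | omega

theorem L1M_isSymm (n : ℕ) : (L1M n).IsSymm := by
  unfold Matrix.IsSymm L1M
  rw [Matrix.transpose_reindex, Matrix.fromBlocks_transpose]
  simp

theorem L2M_isSymm (n : ℕ) : (L2M n).IsSymm := by
  unfold Matrix.IsSymm L2M
  rw [Matrix.transpose_reindex, Matrix.fromBlocks_transpose]
  simp

/-- The type of canonical summands: `H_k(λ)`, `K_k`, `L_k`. -/
inductive CanType where
  | H : ℕ → ℂ → CanType
  | K : ℕ → CanType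
  | L : ℕ → CanType

/-- The size of a canonical pair. -/
def CanType.size : CanType → ℕ
  | .H k _ => k
  | .K k => k
  | .L k => 2 * k + 1

/-- The size parameter of a canonical pair. -/
def CanType.param : CanType → ℕ
  | .H k _ => k
  | .K k => k
  | .L k => k

/-- The first matrix of a canonical pair. -/
def CanType.A : (c : CanType) → Matrix (Fin c.size) (Fin c.size) ℂ
  | .H k _ => delM k
  | .K k => lamM k 0
  | .L k => L1M k

/-- The second matrix of a canonical pair. -/
def CanType.B : (c : CanType) → Matrix (Fin c.size) (Fin c.size) ℂ
  | .H k lam => lamM k lam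
  | .K k => delM k
  | .L k => L2M k

/-- Congruence of pairs of square complex matrices (over possibly different index
types): `(A', B') = (Sᵀ A S, Sᵀ B S)` for some invertible `S`. -/
def CongruentPairs {ι κ : Type} [Fintype ι] [Fintype κ] [DecidableEq ι] [DecidableEq κ]
    (p : Matrix ι ι ℂ × Matrix ι ι ℂ) (q : Matrix κ κ ℂ × Matrix κ κ ℂ) : Prop :=
  ∃ S : Matrix ι κ ℂ, (∃ T : Matrix κ ι ℂ, S * T = 1 ∧ T * S = 1) ∧
    q.1 = Sᵀ * p.1 * S ∧ q.2 = Sᵀ * p.2 * S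

/-- The linear map `(S, R) ↦ (Rᵀ A_j + A_i S, Rᵀ B_j + B_i S)`. -/
def offMap {ι κ : Type} [Fintype ι] [Fintype κ] (Ai Bi : Matrix ι ι ℂ)
    (Aj Bj : Matrix κ κ ℂ) :
    (Matrix ι κ ℂ × Matrix κ ι ℂ) →ₗ[ℂ] (Matrix ι κ ℂ × Matrix ι κ ℂ) where
  toFun SR := (SR.2ᵀ * Aj + Ai * SR.1, SR.2ᵀ * Bj + Bi * SR.1)
  map_add' x y := by
    simp only [Prod.fst_add, Prod.snd_add, Matrix.transpose_add, Matrix.add_mul,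
      Matrix.mul_add, Prod.mk_add_mk, Prod.ext_iff]
    constructor <;> abel
  map_smul' c x := by
    simp only [Prod.smul_fst, Prod.smul_snd, Matrix.transpose_smul, Matrix.smul_mul,
      Matrix.mul_smul, RingHom.id_apply, Prod.smul_mk, smul_add]

/-- `W = {(Rᵀ A_j + A_i S, Rᵀ B_j + B_i S) : S, R}`. -/
def WSpace {ι κ : Type} [Fintype ι] [Fintype κ] (Ai Bi : Matrix ι ι ℂ)
    (Aj Bj : Matrix κ κ ℂ) : Submodule ℂ (Matrix ι κ ℂ × Matrix ι κ ℂ) :=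
  LinearMap.range (offMap Ai Bi Aj Bj)

/-- The space of pairs of (rectangular) matrices supported on given sets of positions. -/
def entryPattern {ι κ : Type} (S1 S2 : Set (ι × κ)) :
    Submodule ℂ (Matrix ι κ ℂ × Matrix ι κ ℂ) where
  carrier := {x | (∀ i j, (i, j) ∉ S1 → x.1 i j = 0) ∧ (∀ i j, (i, j) ∉ S2 → x.2 i j = 0)}
  add_mem' := by
    rintro a b ⟨ha1, ha2⟩ ⟨hb1, hb2⟩
    exact ⟨fun i j h => by show a.1 i j + b.1 i j = 0; rw [ha1 i j h, hb1 i j h, add_zero],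
      fun i j h => by show a.2 i j + b.2 i j = 0; rw [ha2 i j h, hb2 i j h, add_zero]⟩
  zero_mem' := ⟨fun _ _ _ => rfl, fun _ _ _ => rfl⟩
  smul_mem' := by
    rintro c a ⟨ha1, ha2⟩
    exact ⟨fun i j h => by show c * a.1 i j = 0; rw [ha1 i j h, mul_zero],
      fun i j h => by show c * a.2 i j = 0; rw [ha2 i j h, mul_zero]⟩


end

/-!
With 0-based indices, multiplication by `L_k^{(1)}` and `L_k^{(2)}` only moves entries: for
`i < k`, `L_k^{(1)}` exchanges the indices `i` and `i + k + 1`, and `L_k^{(2)}` exchanges `i + 1`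
and `i + k + 1`. So every entry of `(Rᵀ L_m^{(1)} + L_n^{(1)} S, Rᵀ L_m^{(2)} + L_n^{(2)} S)` is a
sum of at most two entries of `R` and `S`. Where this pair vanishes off the support of `P`, these
relations chain entries of `R` and `S` along diagonals, each chain ending in an entry forced to
vanish, and this makes the pair vanish on the support of `P` too: `W ∩ P = 0`.

For `W + P = ⊤`, let `(U, V)` be the coefficient matrices of a linear form vanishing on `W` and
`P`. Vanishing on `W` means `L_n^{(1)} U + L_n^{(2)} V = 0 = U L_m^{(1)} + V L_m^{(2)}`. This
expresses `U` through `V` and makes `V` constant along the diagonals or antidiagonals of each of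
its four blocks; each such line reaches a zero of `V` (on the support of `P`, in the first row or
column of the lower or right blocks, or in the last row or column), so `V = 0` and then `U = 0`.
-/

/-- Reading matrices as `ℕ`-indexed arrays turns all index arithmetic below into plain `ℕ`
arithmetic. -/
def natExt {a b : ℕ} (M : Matrix (Fin a) (Fin b) ℂ) (i j : ℕ) : ℂ :=
  if h : i < a ∧ j < b then M ⟨i, h.1⟩ ⟨j, h.2⟩ else 0

@[simp]
theorem natExt_apply {a b : ℕ} (M : Matrix (Fin a) (Fin b) ℂ) (i : Fin a) (j : Fin b) :
    natExt M i j = M i j := by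
  simp [natExt]

theorem natExt_transpose {a b : ℕ} (M : Matrix (Fin a) (Fin b) ℂ) (i j : ℕ) :
    natExt Mᵀ i j = natExt M j i := by
  simp only [natExt, and_comm, transpose_apply]


section Duality

variable {ι κ : Type} [Fintype ι] [Fintype κ] [DecidableEq ι] [DecidableEq κ]

theorem linearMap_apply_eq_sum (g : Matrix ι κ ℂ →ₗ[ℂ] ℂ) (X : Matrix ι κ ℂ) :
    g X = ∑ i, ∑ j, X i j * g (single i j 1) := by
  conv_lhs => rw [matrix_eq_sum_single X]
  simp only [map_sum]
  refine Finset.sum_congr rfl fun i _ => Finset.sum_congr rfl fun j _ => ?_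
  rw [← smul_eq_mul, ← map_smul, smul_single, smul_eq_mul, mul_one]

def fstCoeff (f : Module.Dual ℂ (Matrix ι κ ℂ × Matrix ι κ ℂ)) : Matrix ι κ ℂ :=
  of fun i j => f (single i j 1, 0)

def sndCoeff (f : Module.Dual ℂ (Matrix ι κ ℂ × Matrix ι κ ℂ)) : Matrix ι κ ℂ :=
  of fun i j => f (0, single i j 1)

theorem dual_apply_eq_sum (f : Module.Dual ℂ (Matrix ι κ ℂ × Matrix ι κ ℂ))
    (x : Matrix ι κ ℂ × Matrix ι κ ℂ) :
    f x = ∑ i, ∑ j, (x.1 i j * fstCoeff f i j + x.2 i j * sndCoeff f i j) := by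
  have hx : f x = f.comp (LinearMap.inl ℂ _ _) x.1 + f.comp (LinearMap.inr ℂ _ _) x.2 := by
    simp [← map_add]
  rw [hx, linearMap_apply_eq_sum, linearMap_apply_eq_sum, ← Finset.sum_add_distrib]
  simp [fstCoeff, sndCoeff, Finset.sum_add_distrib]

theorem eq_zero_of_coeff_eq_zero {f : Module.Dual ℂ (Matrix ι κ ℂ × Matrix ι κ ℂ)}
    (h1 : fstCoeff f = 0) (h2 : sndCoeff f = 0) : f = 0 :=
  LinearMap.ext fun x => by simp [dual_apply_eq_sum, h1, h2]

theorem coeff_mul_eq_zero_of_le_ker {Ai Bi : Matrix ι ι ℂ} {Aj Bj : Matrix κ κ ℂ}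
    {f : Module.Dual ℂ (Matrix ι κ ℂ × Matrix ι κ ℂ)}
    (hf : WSpace Ai Bi Aj Bj ≤ LinearMap.ker f) :
    Aiᵀ * fstCoeff f + Biᵀ * sndCoeff f = 0 ∧ fstCoeff f * Ajᵀ + sndCoeff f * Bjᵀ = 0 := by
  constructor
  · ext u q
    have := hf (LinearMap.mem_range_self _ (single u q 1, 0))
    simpa [offMap, dual_apply_eq_sum, mul_apply, single_apply, ite_and,
      Finset.sum_add_distrib] using this
  · ext i v
    have := hf (LinearMap.mem_range_self _ (0, single v i 1))
    simpa [offMap, dual_apply_eq_sum, mul_apply, single_apply, ite_and,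
      Finset.sum_add_distrib, mul_comm] using this

end Duality

theorem single_mem_entryPattern_fst {ι κ : Type} [DecidableEq ι] [DecidableEq κ]
    {S1 S2 : Set (ι × κ)} {a : ι} {b : κ} (hab : (a, b) ∈ S1) :
    (single a b 1, 0) ∈ entryPattern S1 S2 :=
  ⟨fun _ _ hij => single_apply_of_ne _ _ _ _ _ fun h => hij (h.1 ▸ h.2 ▸ hab), fun _ _ _ => rfl⟩

theorem single_mem_entryPattern_snd {ι κ : Type} [DecidableEq ι] [DecidableEq κ]
    {S1 S2 : Set (ι × κ)} {a : ι} {b : κ} (hab : (a, b) ∈ S2) :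
    (0, single a b 1) ∈ entryPattern S1 S2 :=
  ⟨fun _ _ _ => rfl, fun _ _ hij => single_apply_of_ne _ _ _ _ _ fun h => hij (h.1 ▸ h.2 ▸ hab)⟩

/-- `L1Vec k g` and `L2Vec k g` are `L1M k *ᵥ g` and `L2M k *ᵥ g` for `g` indexed by `ℕ`
(see `L1M_mul_apply`, `L2M_mul_apply`). -/
def L1Vec (k : ℕ) (g : ℕ → ℂ) (i : ℕ) : ℂ :=
  if i < k then g (i + (k + 1)) else if k < i then g (i - (k + 1)) else 0

def L2Vec (k : ℕ) (g : ℕ → ℂ) (i : ℕ) : ℂ :=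
  if i = 0 then 0 else if i ≤ k then g (i + k) else g (i - k)

section L1VecL2Vec

variable {k i : ℕ} {g : ℕ → ℂ}

theorem L1Vec_of_lt (h : i < k) : L1Vec k g i = g (i + (k + 1)) := by
  simp [L1Vec, h]

@[simp]
theorem L1Vec_self : L1Vec k g k = 0 := by
  simp [L1Vec]

@[simp]
theorem L1Vec_add : L1Vec k g (i + (k + 1)) = g i := by
  rw [L1Vec, if_neg (by omega), if_pos (by omega), Nat.add_sub_cancel]

@[simp]
theorem L2Vec_zero : L2Vec k g 0 = 0 := by
  simp [L2Vec]

theorem L2Vec_of_pos_of_le (h0 : 0 < i) (h : i ≤ k) : L2Vec k g i = g (i + k) := by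
  rw [L2Vec, if_neg (by omega), if_pos h]

theorem L2Vec_succ_of_lt (h : i < k) : L2Vec k g (i + 1) = g (i + (k + 1)) := by
  rw [L2Vec_of_pos_of_le i.succ_pos h]
  congr 1
  omega

@[simp]
theorem L2Vec_add : L2Vec k g (i + (k + 1)) = g (i + 1) := by
  rw [L2Vec, if_neg (by omega), if_neg (by omega)]
  congr 1
  omega

end L1VecL2Vec

section Entries

variable (k : ℕ)

theorem L1M_apply (i j : Fin (2 * k + 1)) :
    L1M k i j = if (i : ℕ) + (k + 1) = j ∨ (j : ℕ) + (k + 1) = i then 1 else 0 := by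
  obtain ⟨x, rfl⟩ :=
    (finSumFinEquiv.trans (finCongr (by omega : (k + 1) + k = 2 * k + 1))).surjective i
  obtain ⟨y, rfl⟩ :=
    (finSumFinEquiv.trans (finCongr (by omega : (k + 1) + k = 2 * k + 1))).surjective j
  rcases x with a | a <;> rcases y with b | b <;> have := a.isLt <;> have := b.isLt <;>
    simp only [L1M, FM, Equiv.trans_apply, finSumFinEquiv_apply_left, finSumFinEquiv_apply_right,
      finCongr_apply, reindex_apply, Equiv.symm_trans, finCongr_symm, Equiv.coe_trans,
      submatrix_apply, Function.comp_apply, Fin.cast_cast, Fin.cast_eq_self,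
      finSumFinEquiv_symm_apply_castAdd, finSumFinEquiv_symm_apply_natAdd, fromBlocks_apply₁₁,
      fromBlocks_apply₁₂, fromBlocks_apply₂₁, fromBlocks_apply₂₂, Matrix.zero_apply,
      transpose_apply, of_apply, Fin.val_cast, Fin.val_castAdd, Fin.val_natAdd] <;>
    split_ifs <;> first | rfl | omega

theorem L2M_apply (i j : Fin (2 * k + 1)) :
    L2M k i j =
      if ((i : ℕ) + k = j ∧ 0 < (i : ℕ)) ∨ ((j : ℕ) + k = i ∧ 0 < (j : ℕ)) then 1 else 0 := by
  obtain ⟨x, rfl⟩ :=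
    (finSumFinEquiv.trans (finCongr (by omega : (k + 1) + k = 2 * k + 1))).surjective i
  obtain ⟨y, rfl⟩ :=
    (finSumFinEquiv.trans (finCongr (by omega : (k + 1) + k = 2 * k + 1))).surjective j
  rcases x with a | a <;> rcases y with b | b <;> have := a.isLt <;> have := b.isLt <;>
    simp only [L2M, GM, Equiv.trans_apply, finSumFinEquiv_apply_left, finSumFinEquiv_apply_right,
      finCongr_apply, reindex_apply, Equiv.symm_trans, finCongr_symm, Equiv.coe_trans,
      submatrix_apply, Function.comp_apply, Fin.cast_cast, Fin.cast_eq_self,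
      finSumFinEquiv_symm_apply_castAdd, finSumFinEquiv_symm_apply_natAdd, fromBlocks_apply₁₁,
      fromBlocks_apply₁₂, fromBlocks_apply₂₁, fromBlocks_apply₂₂, Matrix.zero_apply,
      transpose_apply, of_apply, Fin.val_cast, Fin.val_castAdd, Fin.val_natAdd] <;>
    split_ifs <;> first | rfl | omega

variable {c : ℕ}

theorem L1M_mul_apply (S : Matrix (Fin (2 * k + 1)) (Fin c) ℂ) (i : Fin (2 * k + 1)) (q : Fin c) :
    (L1M k * S) i q = L1Vec k (fun u => natExt S u q) i := by
  simp only [mul_apply, L1M_apply, ite_mul, one_mul, zero_mul, L1Vec]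
  split_ifs with h1 h2
  · rw [Fintype.sum_eq_single ⟨i + (k + 1), by omega⟩]
    · rw [if_pos (Or.inl rfl)]
      exact (natExt_apply S _ q).symm
    · intro u hu
      simp only [Ne, Fin.ext_iff] at hu
      rw [if_neg (by omega)]
  · rw [Fintype.sum_eq_single ⟨i - (k + 1), by omega⟩]
    · rw [if_pos (Or.inr (Nat.sub_add_cancel h2))]
      exact (natExt_apply S _ q).symm
    · intro u hu
      simp only [Ne, Fin.ext_iff] at hu
      rw [if_neg (by omega)]
  · exact Finset.sum_eq_zero fun u _ => if_neg (by omega)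

theorem L2M_mul_apply (S : Matrix (Fin (2 * k + 1)) (Fin c) ℂ) (i : Fin (2 * k + 1)) (q : Fin c) :
    (L2M k * S) i q = L2Vec k (fun u => natExt S u q) i := by
  simp only [mul_apply, L2M_apply, ite_mul, one_mul, zero_mul, L2Vec]
  split_ifs with h1 h2
  · exact Finset.sum_eq_zero fun u _ => if_neg (by omega)
  · rw [Fintype.sum_eq_single ⟨i + k, by omega⟩]
    · rw [if_pos (Or.inl ⟨rfl, Nat.pos_of_ne_zero h1⟩)]
      exact (natExt_apply S _ q).symm
    · intro u hu
      simp only [Ne, Fin.ext_iff] at hu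
      rw [if_neg (by omega)]
  · rw [Fintype.sum_eq_single ⟨i - k, by omega⟩]
    · have hk : k < (i : ℕ) := not_le.mp h2
      rw [if_pos (Or.inr ⟨Nat.sub_add_cancel hk.le, Nat.sub_pos_of_lt hk⟩)]
      exact (natExt_apply S _ q).symm
    · intro u hu
      simp only [Ne, Fin.ext_iff] at hu
      rw [if_neg (by omega)]

theorem mul_L1M_apply (U : Matrix (Fin c) (Fin (2 * k + 1)) ℂ) (i : Fin c) (q : Fin (2 * k + 1)) :
    (U * L1M k) i q = L1Vec k (natExt U i) q := by
  rw [← transpose_apply (U * _), transpose_mul, (L1M_isSymm k).eq, L1M_mul_apply]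
  simp only [natExt_transpose]

theorem mul_L2M_apply (U : Matrix (Fin c) (Fin (2 * k + 1)) ℂ) (i : Fin c) (q : Fin (2 * k + 1)) :
    (U * L2M k) i q = L2Vec k (natExt U i) q := by
  rw [← transpose_apply (U * _), transpose_mul, (L2M_isSymm k).eq, L2M_mul_apply]
  simp only [natExt_transpose]

end Entries

def InYPattern (n m i q : ℕ) : Prop :=
  (i = 0 ∧ q ≤ m) ∨ (q = m ∧ i ≤ n) ∨ (i = n ∧ n + m + 2 ≤ q + 1 ∧ q + 1 ≤ 2 * m) ∨
    (q = m ∧ n + m + 2 ≤ i + 1 ∧ i + 1 ≤ 2 * n)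

/-- `offMap (S, R) ∈ LPattern n m` for the `L` blocks, in terms of `r = natExt Rᵀ` and
`s = natExt S` (see `OffMapInPattern.of_mem_LPattern`). -/
structure OffMapInPattern (n m : ℕ) (r s : ℕ → ℕ → ℂ) : Prop where
  fst : ∀ i q, i ≤ 2 * n → q ≤ 2 * m → ¬(i = n ∧ q = m) →
    L1Vec m (r i) q + L1Vec n (fun u => s u q) i = 0
  snd : ∀ i q, i ≤ 2 * n → q ≤ 2 * m → ¬InYPattern n m i q →
    L2Vec m (r i) q + L2Vec n (fun u => s u q) i = 0

namespace OffMapInPattern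

variable {n m i j : ℕ} {r s : ℕ → ℕ → ℂ}

theorem r_center_row (h : OffMapInPattern n m r s) (v : ℕ) (hv : v ≤ 2 * m) (hvm : v ≠ m) :
    r n v = 0 := by
  rcases Nat.lt_or_gt_of_ne hvm with hv' | hv'
  · simpa using h.fst n (v + (m + 1)) (by omega) (by omega) (by omega)
  · obtain ⟨j, rfl⟩ : ∃ j, v = j + (m + 1) := ⟨v - (m + 1), by omega⟩
    simpa [L1Vec_of_lt (show j < m by omega)] using h.fst n j (by omega) (by omega) (by omega)

theorem s_center_col (h : OffMapInPattern n m r s) (i : ℕ) (hi : i ≤ 2 * n) (hin : i ≠ n) :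
    s i m = 0 := by
  rcases Nat.lt_or_gt_of_ne hin with hi' | hi'
  · simpa using h.fst (i + (n + 1)) m (by omega) (by omega) (by omega)
  · obtain ⟨a, rfl⟩ : ∃ a, i = a + (n + 1) := ⟨i - (n + 1), by omega⟩
    simpa [L1Vec_of_lt (show a < n by omega)] using h.fst a m (by omega) (by omega) (by omega)

theorem r_top_right_eq (h : OffMapInPattern n m r s) (hi : i < n) (hj : j < m) :
    r i (j + (m + 1)) = L2Vec m (r (i + 1)) j := by
  have hx := h.fst i j (by omega) (by omega) (by omega)
  have hy := h.snd (i + 1) j (by omega) (by omega) (by unfold InYPattern; omega)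
  rw [L1Vec_of_lt hj, L1Vec_of_lt hi] at hx
  rw [L2Vec_succ_of_lt hi] at hy
  linear_combination hx - hy

theorem r_top_right (h : OffMapInPattern n m r s) (i : ℕ) (hi : i ≤ n) (v : ℕ) (hv : v ≤ 2 * m)
    (hmv : m < v) : r i v = 0 := by
  obtain ⟨j, rfl⟩ : ∃ j, v = j + (m + 1) := ⟨v - (m + 1), by omega⟩
  induction j generalizing i with
  | zero =>
    obtain rfl | hi := hi.eq_or_lt
    · exact h.r_center_row _ hv (by omega)
    · rw [h.r_top_right_eq hi (by omega), L2Vec_zero]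
  | succ j ih =>
    obtain rfl | hi := hi.eq_or_lt
    · exact h.r_center_row _ hv (by omega)
    · rw [h.r_top_right_eq hi (by omega), L2Vec_succ_of_lt (by omega)]
      exact ih (i + 1) hi (by omega) (by omega)

theorem r_top_left_eq (h : OffMapInPattern n m r s) (hi : i + 1 < n) (hj : j < m) :
    r (i + 1) (j + 1) = r i j := by
  have hx := h.fst i (j + (m + 1)) (by omega) (by omega) (by omega)
  have hy := h.snd (i + 1) (j + (m + 1)) (by omega) (by omega) (by unfold InYPattern; omega)
  rw [L1Vec_add, L1Vec_of_lt (by omega)] at hx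
  rw [L2Vec_add, L2Vec_succ_of_lt (by omega)] at hy
  linear_combination hy - hx

theorem r_top_left (h : OffMapInPattern n m r s) (i : ℕ) (hi : i < n) (v : ℕ) (hv : v ≤ m)
    (hiv : i < v) : r i v = 0 := by
  obtain ⟨j, rfl⟩ : ∃ j, v = j + 1 := ⟨v - 1, by omega⟩
  induction i generalizing j with
  | zero =>
    simpa using h.snd 0 (j + (m + 1)) (by omega) (by omega) (by unfold InYPattern; omega)
  | succ i ih =>
    obtain ⟨j, rfl⟩ : ∃ j', j = j' + 1 := ⟨j - 1, by omega⟩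
    rw [h.r_top_left_eq hi (by omega)]
    exact ih (by omega) j (by omega) (by omega)

theorem r_bottom_right_eq (h : OffMapInPattern n m r s) (hi : i + 1 < n) (hj : j < m) :
    r (i + 1 + (n + 1)) (j + (m + 1)) = L2Vec m (r (i + (n + 1))) j := by
  have hx := h.fst (i + 1 + (n + 1)) j (by omega) (by omega) (by omega)
  have hy := h.snd (i + (n + 1)) j (by omega) (by omega) (by unfold InYPattern; omega)
  rw [L1Vec_of_lt hj, L1Vec_add] at hx
  rw [L2Vec_add] at hy
  linear_combination hx - hy

theorem r_bottom_right (h : OffMapInPattern n m r s) (i : ℕ) (hi : i ≤ 2 * n) (v : ℕ)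
    (hv : v ≤ 2 * m) (hmv : m < v) (hvi : v + n < i + m) : r i v = 0 := by
  obtain ⟨j, rfl⟩ : ∃ j, v = j + (m + 1) := ⟨v - (m + 1), by omega⟩
  obtain ⟨a, rfl⟩ : ∃ a, i = a + 1 + (n + 1) := ⟨i - (n + 2), by omega⟩
  induction j generalizing a with
  | zero => rw [h.r_bottom_right_eq (by omega) (by omega), L2Vec_zero]
  | succ j ih =>
    obtain ⟨a, rfl⟩ : ∃ a', a = a' + 1 := ⟨a - 1, by omega⟩
    rw [h.r_bottom_right_eq (by omega) (by omega), L2Vec_succ_of_lt (by omega)]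
    apply ih <;> omega

theorem snd_eq_zero (h : OffMapInPattern n m r s) (hn : 0 < n) (hm : 0 < m) (i q : ℕ)
    (hi : i ≤ 2 * n) (hq : q ≤ 2 * m) : L2Vec m (r i) q + L2Vec n (fun u => s u q) i = 0 := by
  by_cases hp : InYPattern n m i q
  swap
  · exact h.snd i q hi hq hp
  rcases hp with ⟨rfl, hq⟩ | ⟨rfl, hi⟩ | ⟨rfl, hq1, hq2⟩ | ⟨rfl, hi1, hi2⟩
  · rw [L2Vec_zero, add_zero]
    rcases q with _ | q
    · exact L2Vec_zero
    · rw [L2Vec_succ_of_lt (by omega)]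
      exact h.r_top_right 0 (by omega) _ (by omega) (by omega)
  · rw [L2Vec_of_pos_of_le hm le_rfl, h.r_top_right i hi _ (by omega) (by omega), zero_add]
    rcases i with _ | i
    · exact L2Vec_zero
    · rw [L2Vec_succ_of_lt (by omega)]
      exact h.s_center_col _ (by omega) (by omega)
  · obtain ⟨j, rfl⟩ : ∃ j, q = j + (m + 1) := ⟨q - (m + 1), by omega⟩
    have hx := h.fst (i - 1) (j + (m + 1)) (by omega) (by omega) (by omega)
    rw [L1Vec_add, L1Vec_of_lt (by omega), h.r_top_left (i - 1) (by omega) j (by omega) (by omega),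
      zero_add, show i - 1 + (i + 1) = i + i by omega] at hx
    rwa [L2Vec_add, h.r_center_row _ (by omega) (by omega), zero_add, L2Vec_of_pos_of_le hn le_rfl]
  · obtain ⟨a, rfl⟩ : ∃ a, i = a + (n + 1) := ⟨i - (n + 1), by omega⟩
    rw [L2Vec_add, h.s_center_col _ (by omega) (by omega), add_zero, L2Vec_of_pos_of_le hm le_rfl]
    exact h.r_bottom_right _ (by omega) _ (by omega) (by omega) (by omega)

end OffMapInPattern

/-- The coefficient arrays `U`, `V` of a linear form vanishing on `WSpace` and `LPattern` for the
`L` blocks: `left` and `right` say `L1 U + L2 V = 0` and `U L1 + V L2 = 0`. -/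
structure AnnihilatesOffMapAndPattern (n m : ℕ) (U V : ℕ → ℕ → ℂ) : Prop where
  left : ∀ i q, i ≤ 2 * n → q ≤ 2 * m →
    L1Vec n (fun a => U a q) i + L2Vec n (fun a => V a q) i = 0
  right : ∀ i q, i ≤ 2 * n → q ≤ 2 * m → L1Vec m (U i) q + L2Vec m (V i) q = 0
  center : U n m = 0
  pattern : ∀ i q, i ≤ 2 * n → q ≤ 2 * m → InYPattern n m i q → V i q = 0

namespace AnnihilatesOffMapAndPattern

variable {n m a b i q : ℕ} {U V : ℕ → ℕ → ℂ}

theorem U_top (h : AnnihilatesOffMapAndPattern n m U V) (ha : a < n) (hq : q ≤ 2 * m) :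
    U a q = -V (a + 1) q := by
  have := h.left (a + (n + 1)) q (by omega) hq
  rw [L1Vec_add, L2Vec_add] at this
  linear_combination this

theorem U_left (h : AnnihilatesOffMapAndPattern n m U V) (hb : b < m) (hi : i ≤ 2 * n) :
    U i b = -V i (b + 1) := by
  have := h.right i (b + (m + 1)) hi (by omega)
  rw [L1Vec_add, L2Vec_add] at this
  linear_combination this

theorem U_bottom (h : AnnihilatesOffMapAndPattern n m U V) (ha : a + 1 < n) (hq : q ≤ 2 * m) :
    U (a + 1 + (n + 1)) q = -V (a + (n + 1)) q := by
  have := h.left (a + 1) q (by omega) hq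
  rw [L1Vec_of_lt ha, L2Vec_succ_of_lt (by omega)] at this
  linear_combination this

theorem U_right (h : AnnihilatesOffMapAndPattern n m U V) (hb : b + 1 < m) (hi : i ≤ 2 * n) :
    U i (b + 1 + (m + 1)) = -V i (b + (m + 1)) := by
  have := h.right i (b + 1) hi (by omega)
  rw [L1Vec_of_lt hb, L2Vec_succ_of_lt (by omega)] at this
  linear_combination this

theorem U_first_bottom (h : AnnihilatesOffMapAndPattern n m U V) (hn : 0 < n) (hq : q ≤ 2 * m) :
    U (n + 1) q = 0 := by
  simpa [L1Vec_of_lt hn] using h.left 0 q (by omega) hq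

theorem U_first_right (h : AnnihilatesOffMapAndPattern n m U V) (hm : 0 < m) (hi : i ≤ 2 * n) :
    U i (m + 1) = 0 := by
  simpa [L1Vec_of_lt hm] using h.right i 0 hi (by omega)

theorem V_last_row (h : AnnihilatesOffMapAndPattern n m U V) (hn : 0 < n) (hq : q ≤ 2 * m) :
    V (2 * n) q = 0 := by
  simpa [L2Vec_of_pos_of_le hn le_rfl, two_mul] using h.left n q (by omega) hq

theorem V_last_col (h : AnnihilatesOffMapAndPattern n m U V) (hm : 0 < m) (hi : i ≤ 2 * n) :
    V i (2 * m) = 0 := by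
  simpa [L2Vec_of_pos_of_le hm le_rfl, two_mul] using h.right i m hi (by omega)

variable {c d : ℕ}

theorem V_top_left_eq (h : AnnihilatesOffMapAndPattern n m U V) (ha : a < n) (hb : b < m) :
    V (a + 1) b = V a (b + 1) := by
  have := (h.U_top ha (by omega)).symm.trans (h.U_left hb (by omega))
  rwa [neg_inj] at this

theorem V_top_right_eq (h : AnnihilatesOffMapAndPattern n m U V) (ha : a < n) (hc : c + 1 < m) :
    V (a + 1) (c + 1 + (m + 1)) = V a (c + (m + 1)) := by
  have := (h.U_top ha (by omega)).symm.trans (h.U_right hc (by omega))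
  rwa [neg_inj] at this

theorem V_bottom_left_eq (h : AnnihilatesOffMapAndPattern n m U V) (hd : d + 1 < n)
    (hb : b < m) : V (d + (n + 1)) b = V (d + 1 + (n + 1)) (b + 1) := by
  have := (h.U_bottom hd (by omega)).symm.trans (h.U_left hb (by omega))
  rwa [neg_inj] at this

theorem V_bottom_right_eq (h : AnnihilatesOffMapAndPattern n m U V) (hd : d + 1 < n)
    (hc : c + 1 < m) : V (d + (n + 1)) (c + 1 + (m + 1)) = V (d + 1 + (n + 1)) (c + (m + 1)) := by
  have := (h.U_bottom hd (by omega)).symm.trans (h.U_right hc (by omega))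
  rwa [neg_inj] at this

theorem V_first_bottom (h : AnnihilatesOffMapAndPattern n m U V) (hn : 0 < n) (hm : 0 < m)
    (hq0 : 0 < q) (hq : q ≤ 2 * m) : V (n + 1) q = 0 := by
  by_cases hqm : q ≤ m
  · obtain ⟨b, rfl⟩ : ∃ b, q = b + 1 := ⟨q - 1, by omega⟩
    rw [← neg_eq_zero, ← h.U_left (by omega) (by omega), h.U_first_bottom hn (by omega)]
  by_cases hq2 : q = 2 * m
  · exact hq2 ▸ h.V_last_col hm (by omega)
  obtain ⟨c, rfl⟩ : ∃ c, q = c + (m + 1) := ⟨q - (m + 1), by omega⟩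
  rw [← neg_eq_zero, ← h.U_right (by omega) (by omega), h.U_first_bottom hn (by omega)]

theorem V_first_right (h : AnnihilatesOffMapAndPattern n m U V) (hn : 0 < n) (hm : 0 < m)
    (hi0 : 0 < i) (hi : i ≤ 2 * n) : V i (m + 1) = 0 := by
  by_cases hin : i ≤ n
  · obtain ⟨a, rfl⟩ : ∃ a, i = a + 1 := ⟨i - 1, by omega⟩
    rw [← neg_eq_zero, ← h.U_top (by omega) (by omega), h.U_first_right hm (by omega)]
  by_cases hi2 : i = 2 * n
  · exact hi2 ▸ h.V_last_row hn (by omega)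
  obtain ⟨d, rfl⟩ : ∃ d, i = d + (n + 1) := ⟨i - (n + 1), by omega⟩
  rw [← neg_eq_zero, ← h.U_bottom (by omega) (by omega), h.U_first_right hm (by omega)]

theorem V_top_left (h : AnnihilatesOffMapAndPattern n m U V) (a : ℕ) (ha : a ≤ n) (b : ℕ)
    (hb : b ≤ m) : V a b = 0 := by
  induction a generalizing b with
  | zero => exact h.pattern 0 b (by omega) (by omega) (Or.inl ⟨rfl, hb⟩)
  | succ a ih =>
    obtain hb | rfl := hb.lt_or_eq
    · rw [h.V_top_left_eq (by omega) hb]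
      exact ih (by omega) (b + 1) hb
    · exact h.pattern _ _ (by omega) (by omega) (Or.inr (Or.inl ⟨rfl, ha⟩))

theorem V_top_right_of_le (h : AnnihilatesOffMapAndPattern n m U V) (hn : 0 < n) (hm : 0 < m)
    (a : ℕ) (ha : a ≤ n) (b : ℕ) (hb : b ≤ 2 * m) (hmb : m < b) (hba : b ≤ a + m) :
    V a b = 0 := by
  obtain ⟨c, rfl⟩ : ∃ c, b = c + (m + 1) := ⟨b - (m + 1), by omega⟩
  induction c generalizing a with
  | zero => simpa using h.V_first_right hn hm (i := a) (by omega) (by omega)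
  | succ c ih =>
    obtain ⟨a, rfl⟩ : ∃ a', a = a' + 1 := ⟨a - 1, by omega⟩
    rw [h.V_top_right_eq (by omega) (by omega)]
    apply ih <;> omega

theorem V_top_right_of_lt (h : AnnihilatesOffMapAndPattern n m U V) (hm : 0 < m) (a : ℕ)
    (ha : a ≤ n) (b : ℕ) (hb : b ≤ 2 * m) (hab : a + m < b) : V a b = 0 := by
  obtain ⟨c, rfl⟩ : ∃ c, b = c + (m + 1) := ⟨b - (m + 1), by omega⟩
  obtain ⟨t, ht⟩ : ∃ t, c + 1 + t = m := ⟨m - (c + 1), by omega⟩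
  induction t generalizing a c with
  | zero => simpa [show 2 * m = c + (m + 1) by omega] using h.V_last_col hm (i := a) (by omega)
  | succ t ih =>
    obtain rfl | ha := ha.eq_or_lt
    · exact h.pattern _ _ (by omega) (by omega) (by unfold InYPattern; omega)
    · rw [← h.V_top_right_eq ha (by omega)]
      apply ih <;> omega

theorem V_bottom_left_of_le (h : AnnihilatesOffMapAndPattern n m U V) (hn : 0 < n) (hm : 0 < m)
    (a : ℕ) (hna : n < a) (ha : a ≤ 2 * n) (b : ℕ) (hb : b ≤ m) (hab : a ≤ b + n) :
    V a b = 0 := by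
  obtain ⟨d, rfl⟩ : ∃ d, a = d + (n + 1) := ⟨a - (n + 1), by omega⟩
  induction d generalizing b with
  | zero => simpa using h.V_first_bottom hn hm (q := b) (by omega) (by omega)
  | succ d ih =>
    obtain ⟨b, rfl⟩ : ∃ b', b = b' + 1 := ⟨b - 1, by omega⟩
    rw [← h.V_bottom_left_eq (by omega) (by omega)]
    apply ih <;> omega

theorem V_bottom_left_of_lt (h : AnnihilatesOffMapAndPattern n m U V) (hn : 0 < n) (a : ℕ)
    (ha : a ≤ 2 * n) (b : ℕ) (hb : b ≤ m) (hba : b + n < a) : V a b = 0 := by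
  obtain ⟨d, rfl⟩ : ∃ d, a = d + (n + 1) := ⟨a - (n + 1), by omega⟩
  obtain ⟨t, ht⟩ : ∃ t, d + 1 + t = n := ⟨n - (d + 1), by omega⟩
  induction t generalizing b d with
  | zero => simpa [show 2 * n = d + (n + 1) by omega] using h.V_last_row hn (q := b) (by omega)
  | succ t ih =>
    obtain rfl | hb := hb.eq_or_lt
    · exact h.pattern _ _ (by omega) (by omega) (by unfold InYPattern; omega)
    · rw [h.V_bottom_left_eq (by omega) hb]
      apply ih <;> omega

theorem V_bottom_right (h : AnnihilatesOffMapAndPattern n m U V) (hn : 0 < n) (hm : 0 < m)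
    (a : ℕ) (hna : n < a) (ha : a ≤ 2 * n) (b : ℕ) (hmb : m < b) (hb : b ≤ 2 * m) :
    V a b = 0 := by
  obtain ⟨d, rfl⟩ : ∃ d, a = d + (n + 1) := ⟨a - (n + 1), by omega⟩
  obtain ⟨c, rfl⟩ : ∃ c, b = c + (m + 1) := ⟨b - (m + 1), by omega⟩
  induction c generalizing d with
  | zero => simpa using h.V_first_right hn hm (i := d + (n + 1)) (by omega) (by omega)
  | succ c ih =>
    by_cases hd : d + 1 < n
    · rw [h.V_bottom_right_eq hd (by omega)]
      apply ih <;> omega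
    · simpa [show 2 * n = d + (n + 1) by omega] using h.V_last_row hn (q := c + 1 + (m + 1)) hb

theorem V_eq_zero (h : AnnihilatesOffMapAndPattern n m U V) (hn : 0 < n) (hm : 0 < m)
    (a : ℕ) (ha : a ≤ 2 * n) (b : ℕ) (hb : b ≤ 2 * m) : V a b = 0 := by
  rcases le_or_gt a n with han | han <;> rcases le_or_gt b m with hbm | hbm
  · exact h.V_top_left a han b hbm
  · rcases le_or_gt b (a + m) with hab | hab
    · exact h.V_top_right_of_le hn hm a han b hb hbm hab
    · exact h.V_top_right_of_lt hm a han b hb hab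
  · rcases le_or_gt a (b + n) with hab | hab
    · exact h.V_bottom_left_of_le hn hm a han ha b hbm hab
    · exact h.V_bottom_left_of_lt hn a ha b hbm hab
  · exact h.V_bottom_right hn hm a han ha b hbm hb

theorem U_eq_zero (h : AnnihilatesOffMapAndPattern n m U V) (hn : 0 < n) (hm : 0 < m)
    (a : ℕ) (ha : a ≤ 2 * n) (b : ℕ) (hb : b ≤ 2 * m) : U a b = 0 := by
  have hV := h.V_eq_zero hn hm
  rcases lt_trichotomy a n with han | rfl | han
  · rw [h.U_top han hb, hV _ (by omega) b hb, neg_zero]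
  rcases lt_trichotomy b m with hbm | rfl | hbm
  · rw [h.U_left hbm ha, hV a ha _ (by omega), neg_zero]
  · exact h.center
  · by_cases hb1 : b = m + 1
    · exact hb1 ▸ h.U_first_right hm ha
    obtain ⟨c, rfl⟩ : ∃ c, b = c + 1 + (m + 1) := ⟨b - (m + 2), by omega⟩
    rw [h.U_right (by omega) ha, hV a ha _ (by omega), neg_zero]
  · by_cases ha1 : a = n + 1
    · exact ha1 ▸ h.U_first_bottom hn hb
    obtain ⟨d, rfl⟩ : ∃ d, a = d + 1 + (n + 1) := ⟨a - (n + 2), by omega⟩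
    rw [h.U_bottom (by omega) hb, hV _ (by omega) b hb, neg_zero]

end AnnihilatesOffMapAndPattern

def LPattern (n m : ℕ) :
    Submodule ℂ (Matrix (Fin (2 * n + 1)) (Fin (2 * m + 1)) ℂ ×
      Matrix (Fin (2 * n + 1)) (Fin (2 * m + 1)) ℂ) :=
  entryPattern {pq | (pq.1 : ℕ) = n ∧ (pq.2 : ℕ) = m} {pq | InYPattern n m pq.1 pq.2}

section LBlocks

variable {n m : ℕ}

theorem offMap_L_apply_fst (S : Matrix (Fin (2 * n + 1)) (Fin (2 * m + 1)) ℂ)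
    (R : Matrix (Fin (2 * m + 1)) (Fin (2 * n + 1)) ℂ) (i : Fin (2 * n + 1)) (q : Fin (2 * m + 1)) :
    (offMap (L1M n) (L2M n) (L1M m) (L2M m) (S, R)).1 i q =
      L1Vec m (natExt Rᵀ i) q + L1Vec n (fun u => natExt S u q) i := by
  simp only [offMap, LinearMap.coe_mk, AddHom.coe_mk, Matrix.add_apply, mul_L1M_apply,
    L1M_mul_apply]

theorem offMap_L_apply_snd (S : Matrix (Fin (2 * n + 1)) (Fin (2 * m + 1)) ℂ)
    (R : Matrix (Fin (2 * m + 1)) (Fin (2 * n + 1)) ℂ) (i : Fin (2 * n + 1)) (q : Fin (2 * m + 1)) :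
    (offMap (L1M n) (L2M n) (L1M m) (L2M m) (S, R)).2 i q =
      L2Vec m (natExt Rᵀ i) q + L2Vec n (fun u => natExt S u q) i := by
  simp only [offMap, LinearMap.coe_mk, AddHom.coe_mk, Matrix.add_apply, mul_L2M_apply,
    L2M_mul_apply]

theorem OffMapInPattern.of_mem_LPattern {S : Matrix (Fin (2 * n + 1)) (Fin (2 * m + 1)) ℂ}
    {R : Matrix (Fin (2 * m + 1)) (Fin (2 * n + 1)) ℂ}
    (hP : offMap (L1M n) (L2M n) (L1M m) (L2M m) (S, R) ∈ LPattern n m) :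
    OffMapInPattern n m (natExt Rᵀ) (natExt S) where
  fst i q hi hq hiq := by
    simpa [offMap_L_apply_fst] using hP.1 ⟨i, by omega⟩ ⟨q, by omega⟩ hiq
  snd i q hi hq hiq := by
    simpa [offMap_L_apply_snd] using hP.2 ⟨i, by omega⟩ ⟨q, by omega⟩ hiq

theorem disjoint_WSpace_LPattern (hn : 0 < n) (hm : 0 < m) :
    Disjoint (WSpace (L1M n) (L2M n) (L1M m) (L2M m)) (LPattern n m) := by
  rw [Submodule.disjoint_def]
  rintro _ ⟨⟨S, R⟩, rfl⟩ hP
  have h := OffMapInPattern.of_mem_LPattern hP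
  refine Prod.ext (ext fun i q => ?_) (ext fun i q => ?_)
  · rw [offMap_L_apply_fst]
    by_cases hiq : (i : ℕ) = n ∧ (q : ℕ) = m
    · simp [hiq.1, hiq.2]
    · exact h.fst i q (by omega) (by omega) hiq
  · rw [offMap_L_apply_snd]
    exact h.snd_eq_zero hn hm i q (by omega) (by omega)

theorem AnnihilatesOffMapAndPattern.of_le_ker
    {f : Module.Dual ℂ (Matrix (Fin (2 * n + 1)) (Fin (2 * m + 1)) ℂ ×
      Matrix (Fin (2 * n + 1)) (Fin (2 * m + 1)) ℂ)}
    (hf : WSpace (L1M n) (L2M n) (L1M m) (L2M m) ⊔ LPattern n m ≤ LinearMap.ker f) :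
    AnnihilatesOffMapAndPattern n m (natExt (fstCoeff f)) (natExt (sndCoeff f)) := by
  obtain ⟨hl, hr⟩ := coeff_mul_eq_zero_of_le_ker (le_sup_left.trans hf)
  rw [(L1M_isSymm n).eq, (L2M_isSymm n).eq] at hl
  rw [(L1M_isSymm m).eq, (L2M_isSymm m).eq] at hr
  refine ⟨fun i q hi hq => ?_, fun i q hi hq => ?_, ?_, fun i q hi hq hiq => ?_⟩
  · simpa [L1M_mul_apply, L2M_mul_apply] using congr_fun₂ hl ⟨i, by omega⟩ ⟨q, by omega⟩
  · simpa [mul_L1M_apply, mul_L2M_apply] using congr_fun₂ hr ⟨i, by omega⟩ ⟨q, by omega⟩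
  · have hP : (single (⟨n, by omega⟩ : Fin (2 * n + 1)) (⟨m, by omega⟩ : Fin (2 * m + 1)) 1, 0) ∈
        LPattern n m := single_mem_entryPattern_fst ⟨rfl, rfl⟩
    exact (natExt_apply (fstCoeff f) _ _).trans (hf (Submodule.mem_sup_right hP))
  · have hP : (0, single (⟨i, by omega⟩ : Fin (2 * n + 1)) (⟨q, by omega⟩ : Fin (2 * m + 1)) 1) ∈
        LPattern n m := single_mem_entryPattern_snd hiq
    exact (natExt_apply (sndCoeff f) _ _).trans (hf (Submodule.mem_sup_right hP))

theorem WSpace_sup_LPattern (hn : 0 < n) (hm : 0 < m) :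
    WSpace (L1M n) (L2M n) (L1M m) (L2M m) ⊔ LPattern n m = ⊤ := by
  by_contra hne
  obtain ⟨f, hf0, hf⟩ := Submodule.exists_le_ker_of_lt_top _ (lt_top_iff_ne_top.2 hne)
  have h := AnnihilatesOffMapAndPattern.of_le_ker hf
  refine hf0 (eq_zero_of_coeff_eq_zero (ext fun i q => ?_) (ext fun i q => ?_))
  · simpa using h.U_eq_zero hn hm i (by omega) q (by omega)
  · simpa using h.V_eq_zero hn hm i (by omega) q (by omega)

end LBlocks

/-- **Off-diagonal blocks `L_n` vs `L_m`.** With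
`W = {(Rᵀ L_m^{(1)} + L_n^{(1)} S, Rᵀ L_m^{(2)} + L_n^{(2)} S)}` and `P` the pairs
`(X, Y)` of `(2n+1) × (2m+1)` matrices with `X` supported on the single position
`(n+1, m+1)` and `Y` supported on
`{(1,q) : q ≤ m+1} ∪ {(p, m+1) : p ≤ n+1} ∪ {(n+1, m+1+q) : n+1 ≤ q ≤ m−1} ∪
{(n+1+p, m+1) : m+1 ≤ p ≤ n−1}` (1-based indices), one has
`ℂ^{(2n+1)×(2m+1)} × ℂ^{(2n+1)×(2m+1)} = W ⊕ P`. -/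
theorem L_L_offdiagonal (n m : ℕ) (hn : 0 < n) (hm : 0 < m) :
    Disjoint (WSpace (L1M n) (L2M n) (L1M m) (L2M m))
      (entryPattern
        {pq : Fin (2 * n + 1) × Fin (2 * m + 1) | (pq.1 : ℕ) = n ∧ (pq.2 : ℕ) = m}
        {pq : Fin (2 * n + 1) × Fin (2 * m + 1) |
          ((pq.1 : ℕ) = 0 ∧ (pq.2 : ℕ) ≤ m) ∨ ((pq.2 : ℕ) = m ∧ (pq.1 : ℕ) ≤ n) ∨
          ((pq.1 : ℕ) = n ∧ n + m + 2 ≤ (pq.2 : ℕ) + 1 ∧ (pq.2 : ℕ) + 1 ≤ 2 * m) ∨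
          ((pq.2 : ℕ) = m ∧ n + m + 2 ≤ (pq.1 : ℕ) + 1 ∧ (pq.1 : ℕ) + 1 ≤ 2 * n)}) ∧
    WSpace (L1M n) (L2M n) (L1M m) (L2M m) ⊔
      entryPattern
        {pq : Fin (2 * n + 1) × Fin (2 * m + 1) | (pq.1 : ℕ) = n ∧ (pq.2 : ℕ) = m}
        {pq : Fin (2 * n + 1) × Fin (2 * m + 1) |
          ((pq.1 : ℕ) = 0 ∧ (pq.2 : ℕ) ≤ m) ∨ ((pq.2 : ℕ) = m ∧ (pq.1 : ℕ) ≤ n) ∨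
          ((pq.1 : ℕ) = n ∧ n + m + 2 ≤ (pq.2 : ℕ) + 1 ∧ (pq.2 : ℕ) + 1 ≤ 2 * m) ∨
          ((pq.2 : ℕ) = m ∧ n + m + 2 ≤ (pq.1 : ℕ) + 1 ∧ (pq.1 : ℕ) + 1 ≤ 2 * n)} = ⊤ :=
  ⟨disjoint_WSpace_LPattern hn hm, WSpace_sup_LPattern hn hm⟩
end

section
/- Let n, m be positive integers and λ ∈ ℂ. Then the linear map (S,R) ↦ (R^T Λ_m(0) + Δ_n S, R^T Δ_m + Λ_n(λ) S), from ℂ^{n×m} × ℂ^{m×n} to ℂ^{n×m} × ℂ^{n×m}, is surjective; i.e., every pair (A,B) of n×m complex matrices can be written as A = R^T Λ_m(0) + Δ_n S and B = R^T Δ_m + Λ_n(λ) S for some S ∈ ℂ^{n×m} and R ∈ ℂ^{m×n}. (Hence the off-diagonal blocks of the miniversal deformation between summands H_n(λ) and K_m are zero.) -/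
open Matrix

/-!
Put `X = Rᵀ Δ_m` and `Y = Δ_n S`; since `Δ` is an involution, `X` and `Y` range over all
`n × m` matrices, and the system becomes `A = X N + Y`, `B = X + M Y` with
`N = Δ_m Λ_m(0)` the nilpotent upper shift and `M = Λ_n(λ) Δ_n`. Eliminating `Y` leaves the
Stein equation `X - M X N = B - M A`, which is solvable because `N` is nilpotent.
-/

theorem Matrix.exists_sub_mul_mul_eq_of_isNilpotent {R l m : Type*} [Ring R] [Fintype l]
    [Fintype m] [DecidableEq l] [DecidableEq m] (M : Matrix l l R) {N : Matrix m m R}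
    (hN : IsNilpotent N) (C : Matrix l m R) : ∃ X : Matrix l m R, X - M * X * N = C := by
  obtain ⟨p, hp⟩ := hN
  -- `X = ∑_{k < p} Mᵏ C Nᵏ`: the sum `X - M X N` telescopes to `C - Mᵖ C Nᵖ = C`.
  refine ⟨∑ k ∈ Finset.range p, M ^ k * C * N ^ k, ?_⟩
  have hstep (k : ℕ) : M * (M ^ k * C * N ^ k) * N = M ^ (k + 1) * C * N ^ (k + 1) := by
    rw [pow_succ' M k, pow_succ N k]
    simp only [Matrix.mul_assoc]
  rw [Matrix.mul_sum, Matrix.sum_mul, ← Finset.sum_sub_distrib]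
  simp only [hstep]
  rw [Finset.sum_range_sub']
  simp [hp]

theorem delM_eq_submatrix (n : ℕ) :
    delM n = (1 : Matrix (Fin n) (Fin n) ℂ).submatrix Fin.rev id := by
  ext i j
  simp only [delM, of_apply, submatrix_apply, id, one_apply, Fin.ext_iff, Fin.val_rev]
  congr 1
  apply propext
  omega

theorem delM_mul {n : ℕ} {ι : Type*} (S : Matrix (Fin n) ι ℂ) :
    delM n * S = S.submatrix Fin.rev id := by
  rw [delM_eq_submatrix]
  exact one_submatrix_mul _ (Equiv.refl _) S

theorem delM_mul_delM (n : ℕ) : delM n * delM n = 1 := by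
  rw [delM_mul, delM_eq_submatrix, submatrix_submatrix, Fin.rev_involutive.comp_self,
    Function.comp_id, submatrix_id_id]

theorem delM_mul_lamM_zero_apply (n : ℕ) (i j : Fin n) :
    (delM n * lamM n 0) i j = if (j : ℕ) = i + 1 then 1 else 0 := by
  rw [delM_mul]
  simp only [lamM, submatrix_apply, id, of_apply, Fin.val_rev]
  split_ifs <;> first | rfl | omega

theorem delM_mul_lamM_zero_pow_apply (n k : ℕ) (i j : Fin n) :
    ((delM n * lamM n 0) ^ k) i j = if (j : ℕ) = i + k then 1 else 0 := by
  induction k generalizing j with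
  | zero => simp [one_apply, Fin.ext_iff, eq_comm]
  | succ k ih =>
    rw [pow_succ, mul_apply]
    simp only [ih, delM_mul_lamM_zero_apply, boole_mul]
    by_cases h : (i : ℕ) + k < n
    · rw [Fintype.sum_eq_single ⟨(i : ℕ) + k, h⟩]
      · simp [add_assoc]
      · intro x hx
        rw [if_neg]
        exact fun hx' => hx (Fin.ext hx')
    · rw [if_neg (by omega)]
      exact Finset.sum_eq_zero fun x _ => if_neg (by omega)

theorem isNilpotent_delM_mul_lamM_zero (n : ℕ) : IsNilpotent (delM n * lamM n 0) :=
  ⟨n, by ext i j; rw [delM_mul_lamM_zero_pow_apply, if_neg (by omega), Matrix.zero_apply]⟩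

theorem H_K_offdiagonal_general (n m : ℕ) (lam : ℂ)
    (A B : Matrix (Fin n) (Fin m) ℂ) :
    ∃ (S : Matrix (Fin n) (Fin m) ℂ) (R : Matrix (Fin m) (Fin n) ℂ),
      A = Rᵀ * lamM m 0 + delM n * S ∧ B = Rᵀ * delM m + lamM n lam * S := by
  obtain ⟨X, hX⟩ := exists_sub_mul_mul_eq_of_isNilpotent (lamM n lam * delM n)
    (isNilpotent_delM_mul_lamM_zero m) (B - lamM n lam * delM n * A)
  refine ⟨delM n * (A - X * (delM m * lamM m 0)), (X * delM m)ᵀ, ?_, ?_⟩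
  · rw [transpose_transpose, ← Matrix.mul_assoc, delM_mul_delM, Matrix.one_mul, Matrix.mul_assoc,
      add_sub_cancel]
  · rw [transpose_transpose, Matrix.mul_assoc, delM_mul_delM, Matrix.mul_one, ← Matrix.mul_assoc,
      Matrix.mul_sub, ← Matrix.mul_assoc, ← eq_sub_iff_add_eq.mp hX]
    abel

/-- **Off-diagonal blocks `H_n(λ)` vs `K_m`.** The map
`(S, R) ↦ (Rᵀ Λ_m(0) + Δ_n S, Rᵀ Δ_m + Λ_n(λ) S)` is surjective onto pairs of `n × m`
complex matrices; hence the corresponding off-diagonal blocks of the miniversal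
deformation are zero. -/
theorem H_K_offdiagonal (n m : ℕ) (hn : 0 < n) (hm : 0 < m) (lam : ℂ)
    (A B : Matrix (Fin n) (Fin m) ℂ) :
    ∃ (S : Matrix (Fin n) (Fin m) ℂ) (R : Matrix (Fin m) (Fin n) ℂ),
      A = Rᵀ * lamM m 0 + delM n * S ∧ B = Rᵀ * delM m + lamM n lam * S :=
  H_K_offdiagonal_general n m lam A B
end
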